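/- Let α : [0,∞) → (0,2] and θ : [0,∞) → ℝ be continuous with |θ(t)| ≤ min{α(t), 2−α(t)} for all t, let b > 0, s ≥ 0 and f ∈ 𝒮(ℝ). For t ≥ s and x ∈ ℝ define u(x,t) = (2π)^{-1/2} ∫_ℝ e^{iξx} exp( −∫_s^t Log(1 + b ψ_{α(τ),θ(τ)}(ξ)) dτ ) f̂(ξ) dξ. Then u(x,s) = f(x) for all x, and for every x ∈ ℝ and t ≥ s the function t ↦ u(x,t) is differentiable with ∂_t u(x,t) = (2π)^{-1/2} ∫_ℝ e^{iξx} ( −Log(1 + b ψ_{α(t),θ(t)}(ξ)) ) exp( −∫_s^t Log(1 + b ψ_{α(τ),θ(τ)}(ξ)) dτ ) f̂(ξ) dξ; that is, u solves the initial value problem ∂_t u = 𝒫_b^{α(t),θ(t)} u, u(·,s) = f, for the time-dependent logarithmic Fourier-multiplier operator with symbol −Log(1 + b ψ_{α(t),θ(t)}(ξ)). -/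

import Mathlib

/-!
For times in an open neighbourhood of `[0, ∞)` the argument of `b ψ_{α(τ),θ(τ)}(ξ)` stays within
`2π/3` of `0`, so `1 + b ψ` lies in the slit plane with modulus at least `1/2`, and
`‖Log (1 + b ψ(ξ))‖ ≤ K + 3 log (1 + |ξ|)` with `K` depending on `b` only. Hence the multiplier
`exp (-∫ₛᵗ' Log (1 + b ψ))` and its `t'`-derivative (fundamental theorem of calculus) grow at most
polynomially in `ξ`, uniformly for `t'` near `t`; against the Schwartz function `f̂` this
dominates, and one differentiates under the `ξ`-integral. At `t = s` the multiplier is `1` and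
`u(·, s) = f` is Fourier inversion.
-/

open MeasureTheory Complex Real Filter

/-- Fourier transform with the `(2π)^{-1/2}` normalization. -/
noncomputable def fhat (f : ℝ → ℂ) (p : ℝ) : ℂ :=
  (Real.sqrt (2 * Real.pi))⁻¹ * ∫ x : ℝ, Complex.exp (-(Complex.I * p * x)) * f x

/-- Feller symbol `ψ_{α,θ}(ξ) = |ξ|^α e^{i sign(ξ) θ π / 2}` of the α-stable process. -/
noncomputable def feller (α θ ξ : ℝ) : ℂ :=
  ((|ξ| ^ α : ℝ) : ℂ) * Complex.exp (Complex.I * Real.sign ξ * θ * Real.pi / 2)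

open Set
open scoped FourierTransform SchwartzMap Topology

theorem integrable_one_add_norm_pow_mul {D V : Type*} [NormedAddCommGroup D] [NormedSpace ℝ D]
    [MeasurableSpace D] [BorelSpace D] [SecondCountableTopology D] [NormedAddCommGroup V]
    [NormedSpace ℝ V] {μ : Measure D} [μ.HasTemperateGrowth] (g : 𝓢(D, V)) (k : ℕ) :
    Integrable (fun x => (1 + ‖x‖) ^ k * ‖g x‖) μ := by
  refine (((g.integrable_pow_mul μ 0).add (g.integrable_pow_mul μ k)).const_mul
    (2 ^ (k - 1))).mono' (by fun_prop) (.of_forall fun x => ?_)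
  rw [Real.norm_of_nonneg (by positivity)]
  calc (1 + ‖x‖) ^ k * ‖g x‖ ≤ 2 ^ (k - 1) * (1 ^ k + ‖x‖ ^ k) * ‖g x‖ := by
        gcongr; exact add_pow_le zero_le_one (norm_nonneg x) k
    _ = _ := by simp only [Pi.add_apply, one_pow, pow_zero, one_mul, mul_assoc, add_mul]

theorem integrable_exp_mul_log_one_add_abs_mul_norm (g : 𝓢(ℝ, ℂ)) (r : ℝ) :
    Integrable fun ξ : ℝ => Real.exp (r * Real.log (1 + |ξ|)) * ‖g ξ‖ := by
  refine (integrable_one_add_norm_pow_mul g ⌈r⌉₊).mono'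
    (Measurable.aestronglyMeasurable (by fun_prop)) (.of_forall fun ξ => ?_)
  have hlog : 0 ≤ Real.log (1 + |ξ|) := Real.log_nonneg (by linarith [abs_nonneg ξ])
  rw [norm_mul, norm_norm, Real.norm_of_nonneg (Real.exp_pos _).le, Real.norm_eq_abs]
  gcongr
  calc Real.exp (r * Real.log (1 + |ξ|)) ≤ Real.exp (⌈r⌉₊ * Real.log (1 + |ξ|)) := by
        gcongr; exact Nat.le_ceil r
    _ = (1 + |ξ|) ^ ⌈r⌉₊ := by rw [Real.exp_nat_mul, Real.exp_log (by positivity)]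

theorem fhat_eq_fourier (f : ℝ → ℂ) (ξ : ℝ) :
    fhat f ξ = ((√(2 * π))⁻¹ : ℝ) * 𝓕 f (ξ / (2 * π)) := by
  rw [Real.fourier_real_eq_integral_exp_smul, fhat]
  congr 1
  refine integral_congr_ae (.of_forall fun v => ?_)
  have : -2 * π * v * (ξ / (2 * π)) = -(ξ * v) := by field_simp
  simp only [smul_eq_mul, this]
  push_cast
  ring_nf

theorem exists_schwartzMap_coe_eq_fhat (f : 𝓢(ℝ, ℂ)) : ∃ g : 𝓢(ℝ, ℂ), ⇑g = fhat ⇑f := by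
  let e : ℝ ≃L[ℝ] ℝ := ContinuousLinearEquiv.smulLeft (Units.mk0 (2 * π)⁻¹ (by positivity))
  refine ⟨(((√(2 * π))⁻¹ : ℝ) : ℂ) • SchwartzMap.compCLMOfContinuousLinearEquiv ℂ e (𝓕 f), ?_⟩
  ext ξ
  have he : e ξ = ξ / (2 * π) := by rw [div_eq_inv_mul]; rfl
  rw [fhat_eq_fourier, smul_apply, SchwartzMap.compCLMOfContinuousLinearEquiv_apply,
    Function.comp_apply, he, SchwartzMap.fourier_coe, smul_eq_mul]

theorem integral_exp_mul_fhat (f : 𝓢(ℝ, ℂ)) (x : ℝ) :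
    (((√(2 * π))⁻¹ : ℝ) : ℂ) * ∫ ξ : ℝ, cexp (I * ξ * x) * fhat f ξ = f x := by
  have hπ : 0 < 2 * π := by positivity
  set W : ℝ → ℂ := fun v => cexp (((2 * π * (v * x) : ℝ) : ℂ) * I) * 𝓕 (⇑f) v
  have hW : ∫ v, W v = f x := by
    have hinv := Continuous.fourierInv_fourier_eq f.continuous f.integrable
      (by rw [← SchwartzMap.fourier_coe]; exact (𝓕 f).integrable)
    rw [← congrFun hinv x, Real.fourierInv_eq']
    simp [W, mul_comm x]
  have hsub : ∀ ξ : ℝ,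
      cexp (I * ξ * x) * fhat f ξ = (((√(2 * π))⁻¹ : ℝ) : ℂ) * W (ξ / (2 * π)) := by
    intro ξ
    have : 2 * π * (ξ / (2 * π) * x) = ξ * x := by field_simp
    simp only [fhat_eq_fourier, W, this]
    push_cast
    ring_nf
  have hcoef : (√(2 * π))⁻¹ * ((√(2 * π))⁻¹ * |2 * π|) = 1 := by
    rw [abs_of_pos hπ, ← mul_assoc, ← mul_inv, Real.mul_self_sqrt hπ.le, inv_mul_cancel₀ hπ.ne']
  simp_rw [hsub]
  rw [integral_const_mul, Measure.integral_comp_div W, hW, Complex.real_smul,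
    ← mul_assoc, ← mul_assoc, ← Complex.ofReal_mul, ← Complex.ofReal_mul, mul_assoc, hcoef]
  simp

theorem one_add_mem_slitPlane_of_neg_norm_le_two_mul_re {w : ℂ} (hw : -‖w‖ ≤ 2 * w.re) :
    1 + w ∈ slitPlane := by
  rw [mem_slitPlane_iff, add_re, one_re, add_im, one_im, zero_add]
  by_cases him : w.im = 0
  · rw [← abs_re_eq_norm.2 him] at hw
    left
    rcases abs_cases w.re with ⟨h, _⟩ | ⟨h, _⟩ <;> linarith
  · exact Or.inr him

theorem half_le_norm_one_add_of_neg_norm_le_two_mul_re {w : ℂ} (hw : -‖w‖ ≤ 2 * w.re) :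
    1 / 2 ≤ ‖1 + w‖ := by
  have hsq : ‖1 + w‖ ^ 2 = 1 + 2 * w.re + ‖w‖ ^ 2 := by
    rw [Complex.sq_norm, Complex.sq_norm, normSq_apply, normSq_apply]
    simp only [add_re, one_re, add_im, one_im]
    ring
  nlinarith [norm_nonneg (1 + w), sq_nonneg (‖w‖ - 1 / 2)]

theorem norm_log_one_add_le_of_neg_norm_le_two_mul_re {w : ℂ} (hw : -‖w‖ ≤ 2 * w.re) :
    ‖log (1 + w)‖ ≤ Real.log (2 * (1 + ‖w‖)) + π := by
  have hlo := half_le_norm_one_add_of_neg_norm_le_two_mul_re hw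
  have hpos : 0 < ‖1 + w‖ := by linarith
  have hhi : ‖1 + w‖ ≤ 1 + ‖w‖ := by simpa using norm_add_le (1 : ℂ) w
  have habs : |Real.log ‖1 + w‖| ≤ Real.log (2 * (1 + ‖w‖)) := by
    rw [abs_le]
    constructor
    · rw [neg_le, ← Real.log_inv]
      exact Real.log_le_log (by positivity) (by
        rw [inv_le_comm₀ hpos (by positivity)]
        calc (2 * (1 + ‖w‖))⁻¹ ≤ 2⁻¹ := by gcongr; linarith [norm_nonneg w]
          _ ≤ ‖1 + w‖ := by linarith)
    · exact Real.log_le_log hpos (by linarith)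
  calc ‖log (1 + w)‖ ≤ |(log (1 + w)).re| + |(log (1 + w)).im| := norm_le_abs_re_add_abs_im _
    _ = |Real.log ‖1 + w‖| + |arg (1 + w)| := by rw [log_re, log_im]
    _ ≤ Real.log (2 * (1 + ‖w‖)) + π := add_le_add habs (abs_arg_le_pi _)

theorem Real.neg_half_le_cos {φ : ℝ} (hφ : |φ| ≤ 2 * π / 3) : -(1 / 2) ≤ cos φ := by
  have h : cos (2 * π / 3) = -(1 / 2) := by
    rw [show 2 * π / 3 = π - π / 3 by ring, cos_pi_sub, cos_pi_div_three]
  rw [← h, ← cos_abs φ]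
  exact cos_le_cos_of_nonneg_of_le_pi (abs_nonneg φ) (by linarith [pi_pos]) hφ

theorem Real.abs_sign_le_one (x : ℝ) : |Real.sign x| ≤ 1 := by
  rcases sign_apply_eq x with h | h | h <;> simp [h]

theorem Real.monotone_sign : Monotone Real.sign := by
  intro a b hab
  rcases lt_trichotomy a 0 with ha | rfl | ha <;> rcases lt_trichotomy b 0 with hb | rfl | hb <;>
    simp [Real.sign_of_neg, Real.sign_of_pos, *] <;> linarith

theorem feller_eq (a θ ξ : ℝ) :
    feller a θ ξ = ((|ξ| ^ a : ℝ) : ℂ) * cexp (((Real.sign ξ * θ * π / 2 : ℝ) : ℂ) * I) := by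
  unfold feller
  push_cast
  ring_nf

theorem norm_ofReal_mul_feller {b : ℝ} (hb : 0 ≤ b) (a θ ξ : ℝ) :
    ‖(b : ℂ) * feller a θ ξ‖ = b * |ξ| ^ a := by
  rw [feller_eq, norm_mul, norm_mul, norm_exp_ofReal_mul_I, norm_real, norm_real,
    Real.norm_of_nonneg hb, Real.norm_of_nonneg (by positivity), mul_one]

theorem neg_norm_le_two_mul_re_ofReal_mul_feller {b θ : ℝ} (hb : 0 ≤ b) (hθ : |θ| ≤ 4 / 3)
    (a ξ : ℝ) : -‖(b : ℂ) * feller a θ ξ‖ ≤ 2 * ((b : ℂ) * feller a θ ξ).re := by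
  have hφ : |Real.sign ξ * θ * π / 2| ≤ 2 * π / 3 := by
    rw [abs_div, abs_mul, abs_mul, abs_of_pos pi_pos, abs_two]
    have := mul_le_mul (Real.abs_sign_le_one ξ) hθ (abs_nonneg θ) zero_le_one
    nlinarith [pi_pos]
  have hre : ((b : ℂ) * feller a θ ξ).re = b * |ξ| ^ a * Real.cos (Real.sign ξ * θ * π / 2) := by
    rw [feller_eq, re_ofReal_mul, re_ofReal_mul, exp_ofReal_mul_I_re]; ring
  rw [norm_ofReal_mul_feller hb, hre]
  nlinarith [Real.neg_half_le_cos hφ, mul_nonneg hb (rpow_nonneg (abs_nonneg ξ) a)]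

theorem rpow_abs_le_one_add_abs_pow_three {a : ℝ} (ha0 : 0 ≤ a) (ha3 : a ≤ 3) (ξ : ℝ) :
    |ξ| ^ a ≤ (1 + |ξ|) ^ 3 := by
  calc |ξ| ^ a ≤ (1 + |ξ|) ^ a := by gcongr; linarith
    _ ≤ (1 + |ξ|) ^ (3 : ℝ) := rpow_le_rpow_of_exponent_le (by linarith [abs_nonneg ξ]) ha3
    _ = (1 + |ξ|) ^ 3 := by norm_cast

theorem norm_log_one_add_ofReal_mul_feller_le {a θ b : ℝ} (hb : 0 ≤ b) (ha0 : 0 ≤ a) (ha3 : a ≤ 3)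
    (hθ : |θ| ≤ 4 / 3) (ξ : ℝ) :
    ‖log (1 + b * feller a θ ξ)‖ ≤ Real.log (2 * (1 + b)) + π + 3 * Real.log (1 + |ξ|) := by
  have hX : 1 ≤ (1 + |ξ|) ^ 3 := one_le_pow₀ (by linarith [abs_nonneg ξ])
  have hw : 1 + ‖(b : ℂ) * feller a θ ξ‖ ≤ (1 + b) * (1 + |ξ|) ^ 3 := by
    rw [norm_ofReal_mul_feller hb]
    nlinarith [mul_le_mul_of_nonneg_left (rpow_abs_le_one_add_abs_pow_three ha0 ha3 ξ) hb]
  calc ‖log (1 + b * feller a θ ξ)‖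
      ≤ Real.log (2 * (1 + ‖(b : ℂ) * feller a θ ξ‖)) + π :=
        norm_log_one_add_le_of_neg_norm_le_two_mul_re
          (neg_norm_le_two_mul_re_ofReal_mul_feller hb hθ a ξ)
    _ ≤ Real.log (2 * ((1 + b) * (1 + |ξ|) ^ 3)) + π := by
        gcongr
    _ = Real.log (2 * (1 + b)) + π + 3 * Real.log (1 + |ξ|) := by
        rw [← mul_assoc, Real.log_mul (by positivity) (by positivity), Real.log_pow]
        push_cast
        ring

theorem measurable_log_one_add_ofReal_mul_feller {α θ : ℝ → ℝ} (hα : Measurable α)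
    (hθ : Measurable θ) (b : ℝ) :
    Measurable fun p : ℝ × ℝ => log (1 + b * feller (α p.2) (θ p.2) p.1) := by
  have := Real.monotone_sign.measurable
  unfold feller
  fun_prop

theorem continuousOn_feller {α θ : ℝ → ℝ} {U : Set ℝ} (hα : ContinuousOn α U)
    (hθ : ContinuousOn θ U) (hα0 : ∀ τ ∈ U, 0 < α τ) (ξ : ℝ) :
    ContinuousOn (fun τ => feller (α τ) (θ τ) ξ) U := by
  unfold feller
  exact (continuous_ofReal.comp_continuousOn
    (continuousOn_const.rpow hα fun τ hτ => Or.inr (hα0 τ hτ))).mul (by fun_prop)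

theorem intervalIntegral.stronglyMeasurable_of_uncurry {X E : Type*} [MeasurableSpace X]
    [NormedAddCommGroup E] [NormedSpace ℝ E] {F : X → ℝ → E}
    (hF : StronglyMeasurable (Function.uncurry F)) (a b : ℝ) :
    StronglyMeasurable fun x => ∫ τ in a..b, F x τ :=
  hF.integral_prod_right'.sub hF.integral_prod_right'

theorem norm_cexp_neg_intervalIntegral_le {L : ℝ → ℂ} {Λ c s t : ℝ}
    (hL : ∀ τ ∈ uIcc s t, ‖L τ‖ ≤ Λ) (hΛ : 0 ≤ Λ) (hc : |t - s| ≤ c) :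
    ‖cexp (-∫ τ in s..t, L τ)‖ ≤ Real.exp (c * Λ) := by
  refine (norm_exp_le_exp_norm _).trans (Real.exp_le_exp.2 ?_)
  rw [norm_neg, mul_comm]
  exact (intervalIntegral.norm_integral_le_of_norm_le_const fun τ hτ =>
    hL τ (uIoc_subset_uIcc hτ)).trans (mul_le_mul_of_nonneg_left hc hΛ)

theorem hasDerivAt_cexp_neg_intervalIntegral {L : ℝ → ℂ} {U : Set ℝ} {s t : ℝ} (hU : IsOpen U)
    (hL : ContinuousOn L U) (hst : uIcc s t ⊆ U) :
    HasDerivAt (fun t' => cexp (-∫ τ in s..t', L τ)) (-L t * cexp (-∫ τ in s..t, L τ)) t := by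
  have ht : t ∈ U := hst right_mem_uIcc
  have hFTC := intervalIntegral.integral_hasDerivAt_right ((hL.mono hst).intervalIntegrable)
    (hL.stronglyMeasurableAtFilter hU t ht) (hL.continuousAt (hU.mem_nhds ht))
  exact hFTC.neg.cexp.congr_deriv (mul_comm _ _)

theorem eventually_uIcc_subset_of_Ici_subset {U : Set ℝ} {s t : ℝ} (hU : IsOpen U)
    (hsU : Ici s ⊆ U) (hst : s ≤ t) : ∀ᶠ t' in 𝓝 t, uIcc s t' ⊆ U := by
  obtain ⟨r, hr, hball⟩ := Metric.isOpen_iff.1 hU t (hsU hst)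
  filter_upwards [Metric.ball_mem_nhds t hr] with t' ht' τ hτ
  rcases le_or_gt s τ with hsτ | hτs
  · exact hsU hsτ
  · refine hball ?_
    rw [Metric.mem_ball, Real.dist_eq] at ht' ⊢
    have ht'τ : t' ≤ τ := (min_le_iff.1 hτ.1).resolve_left (by linarith)
    rw [abs_sub_lt_iff] at ht' ⊢
    constructor <;> linarith

theorem hasDerivAt_integral_cexp_neg_intervalIntegral_mul
    {L : ℝ → ℝ → ℂ} {g : ℝ → ℂ} {Λ : ℝ → ℝ} {U : Set ℝ} {s t : ℝ}
    (hU : IsOpen U) (hstU : ∀ᶠ t' in 𝓝 t, uIcc s t' ⊆ U)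
    (hLm : Measurable fun p : ℝ × ℝ => L p.2 p.1)
    (hLc : ∀ ξ, ContinuousOn (L · ξ) U)
    (hLΛ : ∀ τ ∈ U, ∀ ξ, ‖L τ ξ‖ ≤ Λ ξ)
    (hg : AEStronglyMeasurable g)
    (hΛg : ∀ c, Integrable fun ξ => Real.exp (c * Λ ξ) * ‖g ξ‖) :
    HasDerivAt (fun t' => ∫ ξ, cexp (-∫ τ in s..t', L τ ξ) * g ξ)
      (∫ ξ, -L t ξ * (cexp (-∫ τ in s..t, L τ ξ) * g ξ)) t := by
  obtain ⟨r, hr, hball⟩ := Metric.eventually_nhds_iff_ball.1 hstU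
  have hΛ0 : ∀ ξ, 0 ≤ Λ ξ := fun ξ =>
    (norm_nonneg _).trans (hLΛ t (hball t (Metric.mem_ball_self hr) right_mem_uIcc) ξ)
  set c := |t - s| + r
  have hexp : ∀ t' ∈ Metric.ball t r, ∀ ξ,
      ‖cexp (-∫ τ in s..t', L τ ξ)‖ ≤ Real.exp (c * Λ ξ) := fun t' ht' ξ =>
    norm_cexp_neg_intervalIntegral_le (fun τ hτ => hLΛ τ (hball t' ht' hτ) ξ) (hΛ0 ξ) <| by
      rw [Metric.mem_ball, Real.dist_eq] at ht'
      linarith [abs_sub_le t' t s]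
  have hmeas : ∀ t', AEStronglyMeasurable (fun ξ => cexp (-∫ τ in s..t', L τ ξ) * g ξ) :=
    fun t' => ((intervalIntegral.stronglyMeasurable_of_uncurry (F := fun ξ τ => L τ ξ)
      hLm.stronglyMeasurable s t').measurable.neg.cexp.aestronglyMeasurable).mul hg
  have hmeas' : AEStronglyMeasurable (fun ξ => -L t ξ * (cexp (-∫ τ in s..t, L τ ξ) * g ξ)) :=
    (hLm.comp (measurable_id.prodMk measurable_const)).neg.aestronglyMeasurable.mul (hmeas t)
  have hint : Integrable fun ξ => cexp (-∫ τ in s..t, L τ ξ) * g ξ :=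
    (hΛg c).mono' (hmeas t) (.of_forall fun ξ => by
      rw [norm_mul]
      exact mul_le_mul_of_nonneg_right (hexp t (Metric.mem_ball_self hr) ξ) (norm_nonneg _))
  have hbound : ∀ ξ, ∀ t' ∈ Metric.ball t r,
      ‖-L t' ξ * (cexp (-∫ τ in s..t', L τ ξ) * g ξ)‖ ≤ Real.exp ((c + 1) * Λ ξ) * ‖g ξ‖ := by
    intro ξ t' ht'
    rw [norm_mul, norm_mul, norm_neg, ← mul_assoc, add_mul, one_mul, Real.exp_add,
      mul_comm _ (Real.exp _)]
    gcongr
    · calc ‖L t' ξ‖ ≤ Λ ξ := hLΛ t' (hball t' ht' right_mem_uIcc) ξ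
        _ ≤ Λ ξ + 1 := le_add_of_nonneg_right zero_le_one
        _ ≤ Real.exp (Λ ξ) := add_one_le_exp _
    · exact hexp t' ht' ξ
  have hderiv : ∀ ξ, ∀ t' ∈ Metric.ball t r,
      HasDerivAt (fun t' => cexp (-∫ τ in s..t', L τ ξ) * g ξ)
        (-L t' ξ * (cexp (-∫ τ in s..t', L τ ξ) * g ξ)) t' := fun ξ t' ht' => by
    simpa only [mul_assoc] using
      (hasDerivAt_cexp_neg_intervalIntegral hU (hLc ξ) (hball t' ht')).mul_const (g ξ)
  exact (hasDerivAt_integral_of_dominated_loc_of_deriv_le (Metric.ball_mem_nhds t hr)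
    (.of_forall hmeas) hint hmeas' (.of_forall hbound) (hΛg (c + 1)) (.of_forall hderiv)).2

-- `α, θ` are only controlled on `[0, ∞)`, but the derivative at `t = s = 0` also sees times
-- `τ < 0`; this open neighbourhood of `[0, ∞)` is where the bounds on `Log (1 + b ψ)` are used.
def fellerRegion (α θ : ℝ → ℝ) : Set ℝ := {τ | 0 < α τ ∧ α τ < 3 ∧ |θ τ| < 4 / 3}

theorem isOpen_fellerRegion {α θ : ℝ → ℝ} (hα : Continuous α) (hθ : Continuous θ) :
    IsOpen (fellerRegion α θ) :=
  (isOpen_lt continuous_const hα).inter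
    ((isOpen_lt hα continuous_const).inter (isOpen_lt hθ.abs continuous_const))

theorem Ici_zero_subset_fellerRegion {α θ : ℝ → ℝ} (hα : ∀ t, 0 ≤ t → α t ∈ Ioc 0 2)
    (hθ : ∀ t, 0 ≤ t → |θ t| ≤ min (α t) (2 - α t)) : Ici 0 ⊆ fellerRegion α θ := fun τ hτ => by
  obtain ⟨h0, h2⟩ := hα τ hτ
  have := hθ τ hτ
  exact ⟨h0, by linarith, by linarith [min_le_left (α τ) (2 - α τ), min_le_right (α τ) (2 - α τ)]⟩

theorem continuousOn_log_one_add_ofReal_mul_feller {α θ : ℝ → ℝ} (hα : Continuous α)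
    (hθ : Continuous θ) {b : ℝ} (hb : 0 ≤ b) (ξ : ℝ) :
    ContinuousOn (fun τ => log (1 + b * feller (α τ) (θ τ) ξ)) (fellerRegion α θ) :=
  (continuousOn_const.add (continuousOn_const.mul (continuousOn_feller hα.continuousOn
    hθ.continuousOn (fun _ hτ => hτ.1) ξ))).clog fun _ hτ =>
      one_add_mem_slitPlane_of_neg_norm_le_two_mul_re
        (neg_norm_le_two_mul_re_ofReal_mul_feller hb hτ.2.2.le _ _)

theorem hasDerivAt_integral_cexp_neg_intervalIntegral_log_feller_mul {α θ : ℝ → ℝ}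
    (hαc : Continuous α) (hθc : Continuous θ) (hα : ∀ t, 0 ≤ t → α t ∈ Ioc 0 2)
    (hθ : ∀ t, 0 ≤ t → |θ t| ≤ min (α t) (2 - α t)) {b s t : ℝ} (hb : 0 ≤ b) (hs : 0 ≤ s)
    (hst : s ≤ t) {h : ℝ → ℂ} (hh : AEStronglyMeasurable h)
    (hh_int : ∀ r, Integrable fun ξ => Real.exp (r * Real.log (1 + |ξ|)) * ‖h ξ‖) :
    HasDerivAt (fun t' => ∫ ξ, cexp (-∫ τ in s..t', log (1 + b * feller (α τ) (θ τ) ξ)) * h ξ)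
      (∫ ξ, -log (1 + b * feller (α t) (θ t) ξ) *
        (cexp (-∫ τ in s..t, log (1 + b * feller (α τ) (θ τ) ξ)) * h ξ)) t := by
  have hU := isOpen_fellerRegion hαc hθc
  have hsU : Ici s ⊆ fellerRegion α θ :=
    (Ici_subset_Ici.2 hs).trans (Ici_zero_subset_fellerRegion hα hθ)
  refine hasDerivAt_integral_cexp_neg_intervalIntegral_mul
    (Λ := fun ξ => Real.log (2 * (1 + b)) + π + 3 * Real.log (1 + |ξ|))
    hU (eventually_uIcc_subset_of_Ici_subset hU hsU hst)
    (measurable_log_one_add_ofReal_mul_feller hαc.measurable hθc.measurable b)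
    (continuousOn_log_one_add_ofReal_mul_feller hαc hθc hb)
    (fun τ hτ ξ => norm_log_one_add_ofReal_mul_feller_le hb hτ.1.le hτ.2.1.le hτ.2.2.le ξ) hh
    fun c => ((hh_int (c * 3)).const_mul (Real.exp (c * (Real.log (2 * (1 + b)) + π)))).congr
      (.of_forall fun ξ => ?_)
  dsimp only
  rw [← mul_assoc, ← Real.exp_add]
  ring_nf

theorem norm_cexp_I_mul_ofReal_mul_ofReal (ξ x : ℝ) : ‖cexp (I * ξ * x)‖ = 1 := by
  rw [norm_exp]
  simp

theorem stmt9
    (α θ : ℝ → ℝ) (hαc : Continuous α) (hθc : Continuous θ)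
    (hα : ∀ t : ℝ, 0 ≤ t → α t ∈ Set.Ioc (0 : ℝ) 2)
    (hθ : ∀ t : ℝ, 0 ≤ t → |θ t| ≤ min (α t) (2 - α t))
    (b : ℝ) (hb : 0 < b) (s : ℝ) (hs : 0 ≤ s) (f : SchwartzMap ℝ ℂ)
    (u : ℝ → ℝ → ℂ)
    (hu : ∀ x t : ℝ, u x t = (Real.sqrt (2 * Real.pi))⁻¹ *
      ∫ ξ : ℝ, Complex.exp (Complex.I * ξ * x) *
        (Complex.exp (-(∫ τ in s..t,
            Complex.log (1 + (b : ℂ) * feller (α τ) (θ τ) ξ))) * fhat (⇑f) ξ)) :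
    (∀ x : ℝ, u x s = f x) ∧
    (∀ x t : ℝ, s ≤ t →
      HasDerivAt (fun t' : ℝ => u x t')
        ((Real.sqrt (2 * Real.pi))⁻¹ *
          ∫ ξ : ℝ, Complex.exp (Complex.I * ξ * x) *
            ((-Complex.log (1 + (b : ℂ) * feller (α t) (θ t) ξ)) *
              (Complex.exp (-(∫ τ in s..t,
                  Complex.log (1 + (b : ℂ) * feller (α τ) (θ τ) ξ))) * fhat (⇑f) ξ)))
        t) := by
  refine ⟨fun x => by simpa [hu] using integral_exp_mul_fhat f x, fun x t hst => ?_⟩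
  obtain ⟨g, hg⟩ := exists_schwartzMap_coe_eq_fhat f
  have key := hasDerivAt_integral_cexp_neg_intervalIntegral_log_feller_mul hαc hθc hα hθ hb.le hs
    hst (h := fun ξ => cexp (I * ξ * x) * g ξ) (by fun_prop) fun r =>
      (integrable_exp_mul_log_one_add_abs_mul_norm g r).congr (.of_forall fun ξ => by
        simp only [norm_mul, norm_cexp_I_mul_ofReal_mul_ofReal, one_mul])
  have hu' : ∀ t', u x t' = (√(2 * π))⁻¹ * ∫ ξ : ℝ,
      cexp (-∫ τ in s..t', log (1 + b * feller (α τ) (θ τ) ξ)) * (cexp (I * ξ * x) * g ξ) := by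
    intro t'
    rw [hu, hg]
    congr 2 with ξ
    ring
  rw [funext hu']
  refine (key.const_mul _).congr_deriv ?_
  rw [hg]
  congr 2 with ξ
  ring
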